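/- arXiv:1810.02670 — 2 statements merged into one kernel-verified Lean document; each statement's English description precedes it below -/
import Mathlib

section
/- Let n ≥ 3 be a natural number, let P be a finite set of prime numbers with |P| ≥ log₂(n!), and let z₁, …, z_k be vectors in {0,1}ⁿ (viewed as integer vectors). Then z₁, …, z_k are linearly independent over ℝ if and only if there exists a prime p ∈ P such that the reductions of z₁, …, z_k modulo p are linearly independent over the field ℤ/pℤ. -/
/-!
Rows of a matrix over a field are linearly independent iff some square submatrix made of
columns has nonzero determinant, and for an integer matrix these determinants commute with
reduction to any field. A square `0/1` minor has absolute value at most `k! ≤ n!`, whereas the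
primes of `P` multiply to at least `2 ^ |P| ≥ n!`, strictly so because `3 ∣ n!`. Hence a nonzero
integer minor survives reduction modulo some `p ∈ P`, and conversely a minor that is nonzero
modulo `p` is nonzero.
-/

open Nat

namespace Matrix

variable {K : Type*} [Field K] {m n : Type*} [Fintype m] [DecidableEq m]

theorem exists_det_submatrix_ne_zero_of_linearIndependent_row [Fintype n] {M : Matrix m n K}
    (h : LinearIndependent K M.row) : ∃ g : m → n, (M.submatrix id g).det ≠ 0 := by
  have hspan : Submodule.span K (Set.range M.col) = ⊤ := by
    apply Submodule.eq_top_of_finrank_eq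
    rw [← rank_eq_finrank_span_cols, h.rank_matrix, Module.finrank_fintype_fun_eq_card]
  obtain ⟨κ, a, -, hspan', hli⟩ := exists_linearIndependent' K M.col
  let e : m ≃ κ := (Pi.basisFun K m).indexEquiv (.mk hli (by rw [hspan', hspan]))
  refine ⟨a ∘ e, ?_⟩
  rw [← isUnit_iff_ne_zero, ← isUnit_iff_isUnit_det, ← linearIndependent_cols_iff_isUnit]
  exact hli.comp e e.injective

theorem linearIndependent_row_of_det_submatrix_ne_zero {M : Matrix m n K} {g : m → n}
    (h : (M.submatrix id g).det ≠ 0) : LinearIndependent K M.row := by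
  apply LinearIndependent.of_comp (LinearMap.funLeft K K g)
  rw [← isUnit_iff_ne_zero, ← isUnit_iff_isUnit_det, ← linearIndependent_rows_iff_isUnit] at h
  exact h

theorem linearIndependent_row_iff_exists_det_submatrix_ne_zero [Fintype n] {M : Matrix m n K} :
    LinearIndependent K M.row ↔ ∃ g : m → n, (M.submatrix id g).det ≠ 0 :=
  ⟨exists_det_submatrix_ne_zero_of_linearIndependent_row,
    fun ⟨_, h⟩ ↦ linearIndependent_row_of_det_submatrix_ne_zero h⟩

theorem linearIndependent_intCast_row_iff [Fintype n] (Z : Matrix m n ℤ) :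
    LinearIndependent K (fun i j ↦ (Z i j : K)) ↔
      ∃ g : m → n, ((Z.submatrix id g).det : K) ≠ 0 := by
  simp_rw [Int.cast_det]
  exact linearIndependent_row_iff_exists_det_submatrix_ne_zero (M := Z.map (Int.cast : ℤ → K))

theorem abs_det_le_factorial {R : Type*} [CommRing R] [LinearOrder R] [IsStrictOrderedRing R]
    {A : Matrix m m R} (h : ∀ i j, |A i j| ≤ 1) : |A.det| ≤ (Fintype.card m)! := by
  simpa using det_le (abv := AbsoluteValue.abs) h

end Matrix

theorem Nat.factorial_ne_two_pow {n : ℕ} (hn : 3 ≤ n) (k : ℕ) : n ! ≠ 2 ^ k := by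
  intro h
  have : 3 ∣ 2 ^ k := h ▸ Nat.dvd_factorial (by norm_num) hn
  have := Nat.Prime.dvd_of_dvd_pow Nat.prime_three this
  omega

theorem Int.exists_prime_not_dvd_of_natAbs_lt_prod {P : Finset ℕ} (hP : ∀ p ∈ P, p.Prime)
    {d : ℤ} (hd : d ≠ 0) (hlt : d.natAbs < ∏ p ∈ P, p) : ∃ p ∈ P, ¬ (p : ℤ) ∣ d := by
  by_contra! hdvd
  have hprod : ∏ p ∈ P, p ∣ d.natAbs :=
    Finset.prod_primes_dvd _ (fun p hp ↦ (hP p hp).prime) fun p hp ↦ Int.natCast_dvd.mp (hdvd p hp)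
  exact hlt.not_ge (Nat.le_of_dvd (Int.natAbs_pos.mpr hd) hprod)

/-- Let `n ≥ 3`, let `P` be a finite set of primes with `|P| ≥ log₂(n!)`, and
let `z₁, …, z_k ∈ {0,1}ⁿ` be integer vectors. Then `z₁, …, z_k` are linearly independent
over `ℝ` iff there is `p ∈ P` such that their reductions mod `p` are linearly independent
over `ℤ/pℤ`. -/
theorem stmt_0 (n k : ℕ) (hn : 3 ≤ n) (P : Finset ℕ)
    (hP : ∀ p ∈ P, Nat.Prime p) (hcard : Real.logb 2 (Nat.factorial n) ≤ (P.card : ℝ))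
    (z : Fin k → Fin n → ℤ) (h01 : ∀ i j, z i j = 0 ∨ z i j = 1) :
    LinearIndependent ℝ (fun i : Fin k => fun j : Fin n => ((z i j : ℝ))) ↔
      ∃ p ∈ P, LinearIndependent (ZMod p)
        (fun i : Fin k => fun j : Fin n => ((z i j : ZMod p))) := by
  have hfact : n ! < ∏ p ∈ P, p := by
    have hpow : n ! ≤ 2 ^ P.card := by
      exact_mod_cast (Real.logb_le_iff_le_rpow one_lt_two (by positivity)).mp hcard
    exact (hpow.lt_of_ne (factorial_ne_two_pow hn _)).trans_le
      (P.pow_card_le_prod _ _ fun p hp ↦ (hP p hp).two_le)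
  have hminor (g : Fin k → Fin n) (hk : k ≤ n) :
      ((Matrix.of z).submatrix id g).det.natAbs ≤ n ! := by
    have := Matrix.abs_det_le_factorial (A := (Matrix.of z).submatrix id g)
      fun i j ↦ by rcases h01 i (g j) with h | h <;> simp [h]
    rw [Int.abs_eq_natAbs, Fintype.card_fin] at this
    exact (Int.ofNat_le.mp this).trans (factorial_le hk)
  constructor
  · intro h
    have hk : k ≤ n := by simpa using h.fintype_card_le_finrank
    obtain ⟨g, hg⟩ := (Matrix.linearIndependent_intCast_row_iff (Matrix.of z)).mp h
    obtain ⟨p, hp, hpd⟩ := Int.exists_prime_not_dvd_of_natAbs_lt_prod hP (Int.cast_ne_zero.mp hg)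
      ((hminor g hk).trans_lt hfact)
    have := Fact.mk (hP p hp)
    refine ⟨p, hp, (Matrix.linearIndependent_intCast_row_iff (Matrix.of z)).mpr ⟨g, ?_⟩⟩
    rwa [Ne, ZMod.intCast_zmod_eq_zero_iff_dvd]
  · rintro ⟨p, hp, h⟩
    have := Fact.mk (hP p hp)
    obtain ⟨g, hg⟩ := (Matrix.linearIndependent_intCast_row_iff (Matrix.of z)).mp h
    refine (Matrix.linearIndependent_intCast_row_iff (Matrix.of z)).mpr ⟨g, ?_⟩
    exact Int.cast_ne_zero.mpr fun h0 ↦ hg (by rw [h0, Int.cast_zero])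
end

section
/- Let C ⊆ ℝⁿ be a nonempty compact convex set, let I be a nonempty finite index set, and for each i ∈ I let aᵢ ∈ ℝⁿ and bᵢ ∈ ℝ. Define ε* = max_{x ∈ C} min_{i ∈ I} (⟨aᵢ, x⟩ − bᵢ) (the maximum is attained since C is compact and the objective is continuous). Then there exists an index i ∈ I such that every maximizer x ∈ C (i.e., every x ∈ C with min_{j ∈ I} (⟨aⱼ, x⟩ − bⱼ) = ε*) satisfies ⟨aᵢ, x⟩ − bᵢ = ε*. -/
/-!
The functions `fᵢ x = ⟨aᵢ, x⟩ - bᵢ` are concave. If no `fᵢ` equals `ε` on all maximizers,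
pick for each `i` a maximizer `xᵢ` with `fᵢ xᵢ > ε`. At the barycenter `y` of the `xᵢ`,
Jensen gives `fᵢ y ≥ avgₖ fᵢ xₖ > ε` for every `i`, since all terms are `≥ ε` and the
`k = i` term is strict. So `minᵢ fᵢ y > ε`, contradicting maximality of `ε`.
-/

open Finset

section Concave

variable {E ι : Type*} [AddCommGroup E] [Module ℝ E] [Fintype ι]

theorem lt_map_average_of_concaveOn {s : Set E} {f : E → ℝ} (hf : ConcaveOn ℝ s f)
    {x : ι → E} (hxs : ∀ k, x k ∈ s) {ε : ℝ} (hge : ∀ k, ε ≤ f (x k)) (i : ι)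
    (hlt : ε < f (x i)) :
    ε < f (∑ k, (Fintype.card ι : ℝ)⁻¹ • x k) := by
  have : Nonempty ι := ⟨i⟩
  set w : ℝ := (Fintype.card ι : ℝ)⁻¹
  have hw : 0 < w := by positivity
  have hwsum : ∑ _k : ι, w = 1 := by simp [w]
  calc ε = ∑ _k : ι, w • ε := by rw [← sum_smul, hwsum, one_smul]
    _ < ∑ k, w • f (x k) :=
        sum_lt_sum (fun k _ => smul_le_smul_of_nonneg_left (hge k) hw.le)
          ⟨i, mem_univ i, smul_lt_smul_of_pos_left hlt hw⟩
    _ ≤ f (∑ k, w • x k) :=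
        hf.le_map_sum (fun _ _ => hw.le) hwsum (fun k _ => hxs k)

theorem exists_eq_on_maximizers_of_concaveOn [Nonempty ι] {s : Set E} (hs : Convex ℝ s)
    {f : ι → E → ℝ} (hf : ∀ i, ConcaveOn ℝ s (f i)) {ε : ℝ} (hub : ∀ x ∈ s, ∃ i, f i x ≤ ε) :
    ∃ i, ∀ x ∈ s, (∀ k, ε ≤ f k x) → f i x = ε := by
  by_contra! hcon
  choose x hxs hge hne using hcon
  set y := ∑ k, (Fintype.card ι : ℝ)⁻¹ • x k
  have hys : y ∈ s :=
    hs.sum_mem (fun _ _ => by positivity) (by simp) (fun k _ => hxs k)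
  obtain ⟨i, hi⟩ := hub y hys
  exact hi.not_gt <| lt_map_average_of_concaveOn (hf i) hxs (fun k => hge k i) i
    ((hge i i).lt_of_ne' (hne i))

end Concave

theorem stmt_8_general {n : ℕ} {I : Type*} [Fintype I] [Nonempty I]
    (C : Set (Fin n → ℝ)) (hCconv : Convex ℝ C)
    (a : I → Fin n → ℝ) (b : I → ℝ) (ε : ℝ)
    (hub : ∀ x ∈ C,
      (Finset.univ.inf' Finset.univ_nonempty fun i => (∑ j, a i j * x j) - b i) ≤ ε) :
    ∃ i : I, ∀ x ∈ C,
      (Finset.univ.inf' Finset.univ_nonempty fun i => (∑ j, a i j * x j) - b i) = ε →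
        (∑ j, a i j * x j) - b i = ε := by
  have hconcave : ∀ i, ConcaveOn ℝ C fun x => (∑ j, a i j * x j) - b i := fun i =>
    ((dotProductBilin ℝ ℝ (a i)).concaveOn hCconv).sub (convexOn_const (b i) hCconv)
  obtain ⟨i, hi⟩ := exists_eq_on_maximizers_of_concaveOn hCconv hconcave fun x hx => by
    simpa using hub x hx
  exact ⟨i, fun x hx hmax => hi x hx fun k => hmax.ge.trans (inf'_le _ (mem_univ k))⟩

/-- Let `C ⊆ ℝⁿ` be a nonempty compact convex set, `I` a nonempty finite
index set, and for `i ∈ I` let `aᵢ ∈ ℝⁿ`, `bᵢ ∈ ℝ`. If `ε` is the maximum over `x ∈ C`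
of `min_{i ∈ I} (⟨aᵢ, x⟩ − bᵢ)` (attained on `C`), then there is an index `i ∈ I` such
that every maximizer `x ∈ C` satisfies `⟨aᵢ, x⟩ − bᵢ = ε`. -/
theorem stmt_8 {n : ℕ} {I : Type*} [Fintype I] [Nonempty I]
    (C : Set (Fin n → ℝ)) (hCne : C.Nonempty) (hCcomp : IsCompact C) (hCconv : Convex ℝ C)
    (a : I → Fin n → ℝ) (b : I → ℝ) (ε : ℝ)
    (hub : ∀ x ∈ C,
      (Finset.univ.inf' Finset.univ_nonempty fun i => (∑ j, a i j * x j) - b i) ≤ ε)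
    (hatt : ∃ x ∈ C,
      (Finset.univ.inf' Finset.univ_nonempty fun i => (∑ j, a i j * x j) - b i) = ε) :
    ∃ i : I, ∀ x ∈ C,
      (Finset.univ.inf' Finset.univ_nonempty fun i => (∑ j, a i j * x j) - b i) = ε →
        (∑ j, a i j * x j) - b i = ε :=
  stmt_8_general C hCconv a b ε hub
end
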